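/- The traveling wave solution ρ₁(t,x) = ρ_{1,0}(x − ct) of the Transport–Stokes system, with ρ_{1,0} = 1_{B(0,1)}/|B(0,1)| and c = −(4/15)e₃, is unstable in the 1-Wasserstein metric: there exists ε > 0 such that for every η > 0 there is an initial probability density ρ̄₀ ∈ L∞ with W₁(ρ̄₀, ρ_{1,0}) < η whose solution ρ̄ satisfies W₁(ρ̄(t), ρ₁(t)) > ε for all sufficiently large t. -/

import Mathlib

open MeasureTheory Real Filter

noncomputable abbrev E3 := EuclideanSpace ℝ (Fin 3)

noncomputable def W1 (μ ν : E3 → ℝ) : ℝ :=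
  ⨆ f : {f : E3 → ℝ // LipschitzWith 1 f}, |(∫ x, f.1 x * μ x) - ∫ x, f.1 x * ν x|

noncomputable def ω₁ : ℝ := (volume (Metric.ball (0:E3) 1)).toReal

noncomputable def cTS : E3 := (-(4/15 : ℝ)) • (EuclideanSpace.single (2 : Fin 3) (1:ℝ))

/-- normalized spherical patch of radius R -/
noncomputable def patch (R : ℝ) : E3 → ℝ :=
  fun x => Set.indicator (Metric.ball (0:E3) R) 1 x / (volume (Metric.ball (0:E3) R)).toReal

/-- traveling-wave solution of radius R at time t -/
noncomputable def ρR (R t : ℝ) : E3 → ℝ :=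
  fun x => (R ^ 3)⁻¹ *
    (Set.indicator (Metric.ball (0:E3) 1) 1 (R⁻¹ • x - (t / (ω₁ * R ^ 2)) • cTS) / ω₁)

/-!
Perturb the unit patch to the patch of radius `R = 1 + η/2`. Rescaling the ball shows that the
two patches are `|R - 1|`-close in `W₁`. The perturbed solution is again a uniform ball, but it
moves with velocity `c / (ω₁ R)` instead of `c / ω₁`, so the two centres separate linearly in
time. Since the average of a linear form over a ball is its value at the centre, testing `W₁`
against the unit linear form in the direction of separation bounds `W₁` below by the distance
between the centres.
-/

open Metric
open scoped Pointwise

section UniformDensity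

variable {α : Type*} [MeasurableSpace α] (μ : Measure α)

noncomputable def uniformDensity (s : Set α) (x : α) : ℝ := s.indicator 1 x / μ.real s

variable {μ}

lemma uniformDensity_nonneg (s : Set α) (x : α) : 0 ≤ uniformDensity μ s x :=
  div_nonneg (Set.indicator_nonneg (fun _ _ => zero_le_one) x) measureReal_nonneg

lemma uniformDensity_le (s : Set α) (x : α) : uniformDensity μ s x ≤ (μ.real s)⁻¹ := by
  rw [uniformDensity, div_eq_inv_mul]
  exact mul_le_of_le_one_right (inv_nonneg.2 measureReal_nonneg)
    (Set.indicator_le_self' (fun _ _ => zero_le_one) x)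

lemma integral_mul_uniformDensity {s : Set α} (hs : MeasurableSet s) (f : α → ℝ) :
    ∫ x, f x * uniformDensity μ s x ∂μ = ⨍ x in s, f x ∂μ := by
  simp_rw [uniformDensity, mul_div_assoc', ← Set.indicator_mul_right, Pi.one_apply, mul_one]
  rw [integral_div, integral_indicator hs, setAverage_eq, smul_eq_mul, inv_mul_eq_div]

lemma integral_uniformDensity {s : Set α} (hs : MeasurableSet s) (h0 : μ s ≠ 0) (hfin : μ s ≠ ⊤) :
    ∫ x, uniformDensity μ s x ∂μ = 1 := by
  simpa [setAverage_const h0 hfin] using integral_mul_uniformDensity (μ := μ) hs (fun _ => 1)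

lemma setAverage_sub {s : Set α} {f g : α → ℝ} (hf : IntegrableOn f s μ)
    (hg : IntegrableOn g s μ) :
    ⨍ x in s, (f x - g x) ∂μ = (⨍ x in s, f x ∂μ) - ⨍ x in s, g x ∂μ := by
  simp only [setAverage_eq, integral_sub hf hg, smul_sub]

lemma dist_setAverage_le {E : Type*} [NormedAddCommGroup E] [NormedSpace ℝ E] [CompleteSpace E]
    {s : Set α} {f : α → E} {c : E} {C : ℝ} (hs : MeasurableSet s) (h0 : μ s ≠ 0) (hfin : μ s ≠ ⊤)
    (hfi : IntegrableOn f s μ) (hf : ∀ x ∈ s, dist (f x) c ≤ C) :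
    dist (⨍ x in s, f x ∂μ) c ≤ C :=
  (convex_closedBall c C).set_average_mem isClosed_closedBall h0 hfin
    (ae_restrict_of_forall_mem hs hf) hfi

end UniformDensity

section Haar

variable {E : Type*} [NormedAddCommGroup E] [NormedSpace ℝ E] [MeasurableSpace E] [BorelSpace E]
  [FiniteDimensional ℝ E] {μ : Measure E} [μ.IsAddHaarMeasure]

lemma Continuous.integrableOn_ball {f : E → ℝ} (hf : Continuous f) (a : E) (r : ℝ) :
    IntegrableOn f (ball a r) μ :=
  (hf.continuousOn.integrableOn_compact (isCompact_closedBall a r)).mono_set ball_subset_closedBall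

lemma setAverage_smul_set (f : E → ℝ) (s : Set E) {R : ℝ} (hR : 0 < R) :
    ⨍ x in R • s, f x ∂μ = ⨍ x in s, f (R • x) ∂μ := by
  rw [setAverage_eq, setAverage_eq, Measure.setIntegral_comp_smul_of_pos μ f s hR,
    measureReal_def, Measure.addHaar_smul_of_nonneg μ hR.le, ENNReal.toReal_mul,
    ENNReal.toReal_ofReal (by positivity), ← measureReal_def, smul_eq_mul, smul_eq_mul, smul_eq_mul,
    mul_inv, mul_assoc, mul_left_comm]

lemma ContinuousLinearMap.setAverage_ball (ℓ : E →L[ℝ] ℝ) (a : E) {r : ℝ} (hr : 0 < r) :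
    ⨍ x in ball a r, ℓ x ∂μ = ℓ a := by
  have hpre : (fun x => (a + a) - x) ⁻¹' ball a r = ball a r := by
    ext x
    have : dist (a + a - x) a = dist x a := by
      rw [dist_eq_norm, dist_eq_norm', show a + a - x - a = a - x by abel]
    simp only [Set.mem_preimage, mem_ball, this]
  have hrefl : ∫ x in ball a r, ℓ ((a + a) - x) ∂μ = ∫ x in ball a r, ℓ x ∂μ := by
    conv_lhs => rw [← hpre]
    exact (Measure.measurePreserving_sub_left μ (a + a)).setIntegral_preimage_emb
      (measurableEmbedding_subLeft _) _ _
  have hint : IntegrableOn ℓ (ball a r) μ := ℓ.continuous.integrableOn_ball a r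
  have hpos : μ.real (ball a r) ≠ 0 :=
    (measureReal_ne_zero_iff measure_ball_lt_top.ne).2 (measure_ball_pos μ a hr).ne'
  simp only [map_sub, map_add] at hrefl
  have hc : IntegrableOn (fun _ => ℓ a + ℓ a) (ball a r) μ := integrableOn_const
  rw [integral_sub hc hint, setIntegral_const, smul_eq_mul] at hrefl
  rw [setAverage_eq, smul_eq_mul]
  field_simp
  linarith

lemma dist_setAverage_ball_le {f : E → ℝ} (hf : LipschitzWith 1 f) (a b : E) {r : ℝ}
    (hr : 0 < r) : dist (⨍ x in ball a r, f x ∂μ) (f b) ≤ dist a b + r := by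
  refine dist_setAverage_le measurableSet_ball (measure_ball_pos μ a hr).ne'
    measure_ball_lt_top.ne (hf.continuous.integrableOn_ball a r) fun x hx => ?_
  calc dist (f x) (f b) ≤ dist x b := by simpa using hf.dist_le_mul x b
    _ ≤ dist x a + dist a b := dist_triangle x a b
    _ ≤ dist a b + r := by linarith [mem_ball.1 hx]

lemma abs_setAverage_ball_sub_le {f : E → ℝ} (hf : LipschitzWith 1 f) {R : ℝ} (hR : 0 < R) :
    |(⨍ x in ball 0 R, f x ∂μ) - ⨍ x in ball 0 1, f x ∂μ| ≤ |R - 1| := by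
  have hcont : Continuous fun x => f (R • x) := hf.continuous.comp (continuous_const_smul R)
  rw [← smul_unitBall_of_pos hR, setAverage_smul_set f _ hR, ← setAverage_sub
    (hcont.integrableOn_ball 0 1) (hf.continuous.integrableOn_ball 0 1), ← Real.dist_0_eq_abs]
  refine dist_setAverage_le measurableSet_ball (measure_ball_pos μ 0 one_pos).ne'
    measure_ball_lt_top.ne ((hcont.sub hf.continuous).integrableOn_ball 0 1) fun x hx => ?_
  rw [mem_ball_zero_iff] at hx
  calc dist (f (R • x) - f x) 0 = dist (f (R • x)) (f x) := by rw [Real.dist_0_eq_abs, Real.dist_eq]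
    _ ≤ dist (R • x) x := by simpa using hf.dist_le_mul (R • x) x
    _ = |R - 1| * ‖x‖ := by
        rw [dist_eq_norm, show R • x - x = (R - 1) • x by rw [sub_smul, one_smul], norm_smul,
          Real.norm_eq_abs]
    _ ≤ |R - 1| := mul_le_of_le_one_right (abs_nonneg _) hx.le

end Haar

noncomputable def ballDensity (a : E3) (r : ℝ) : E3 → ℝ := uniformDensity volume (ball a r)

noncomputable def waveVelocity (R : ℝ) : E3 := (ω₁ * R)⁻¹ • cTS

lemma ω₁_pos : 0 < ω₁ :=
  ENNReal.toReal_pos (measure_ball_pos volume 0 one_pos).ne' measure_ball_lt_top.ne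

lemma volume_real_ball (a : E3) {r : ℝ} (hr : 0 ≤ r) : volume.real (ball a r) = r ^ 3 * ω₁ := by
  rw [measureReal_def, Measure.addHaar_ball volume a hr, ENNReal.toReal_mul,
    ENNReal.toReal_ofReal (by positivity), finrank_euclideanSpace_fin, ω₁]

lemma patch_eq_ballDensity (R : ℝ) : patch R = ballDensity 0 R := rfl

lemma ρR_eq_ballDensity {R : ℝ} (hR : 0 < R) (t : ℝ) :
    ρR R t = ballDensity (t • waveVelocity R) R := by
  ext x
  have hmem : R⁻¹ • x - (t / (ω₁ * R ^ 2)) • cTS ∈ ball (0 : E3) 1 ↔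
      x ∈ ball (t • waveVelocity R) R := by
    have : R⁻¹ • x - (t / (ω₁ * R ^ 2)) • cTS = R⁻¹ • (x - t • waveVelocity R) := by
      rw [waveVelocity, smul_sub, smul_smul, smul_smul]
      congr 2
      field_simp
    rw [this, mem_ball_zero_iff, mem_ball, dist_eq_norm, norm_smul, norm_inv, Real.norm_eq_abs,
      abs_of_pos hR, inv_mul_lt_one₀ hR]
  rw [ρR, ballDensity, uniformDensity, volume_real_ball _ hR.le]
  by_cases hx : x ∈ ball (t • waveVelocity R) R
  · simp [Set.indicator_of_mem hx, Set.indicator_of_mem (hmem.2 hx), mul_comm]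
  · simp [Set.indicator_of_notMem hx, Set.indicator_of_notMem (mt hmem.1 hx)]

lemma integral_mul_ballDensity (f : E3 → ℝ) (a : E3) (r : ℝ) :
    ∫ x, f x * ballDensity a r x = ⨍ x in ball a r, f x :=
  integral_mul_uniformDensity measurableSet_ball f

lemma bddAbove_W1_ballDensity (a b : E3) {r s : ℝ} (hr : 0 < r) (hs : 0 < s) :
    BddAbove (Set.range fun f : {f : E3 → ℝ // LipschitzWith 1 f} =>
      |(∫ x, f.1 x * ballDensity a r x) - ∫ x, f.1 x * ballDensity b s x|) := by
  refine ⟨(dist a 0 + r) + (dist b 0 + s), ?_⟩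
  rintro _ ⟨⟨f, hf⟩, rfl⟩
  simp only [integral_mul_ballDensity, ← Real.dist_eq]
  exact (dist_triangle_right _ _ (f 0)).trans
    (add_le_add (dist_setAverage_ball_le hf a 0 hr) (dist_setAverage_ball_le hf b 0 hs))

lemma dist_le_W1_ballDensity (a b : E3) {r s : ℝ} (hr : 0 < r) (hs : 0 < s) :
    dist a b ≤ W1 (ballDensity a r) (ballDensity b s) := by
  -- for `a = b` the direction is `0⁻¹ • 0 = 0`, and both sides vanish
  set ℓ : E3 →L[ℝ] ℝ := innerSL ℝ (‖a - b‖⁻¹ • (a - b))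
  have hℓ : LipschitzWith 1 ℓ := ℓ.lipschitz.weaken (by
    rw [← NNReal.coe_le_coe, coe_nnnorm, innerSL_apply_norm, norm_smul, norm_inv, norm_norm]
    exact inv_mul_le_one_of_le₀ le_rfl (norm_nonneg _))
  calc dist a b = |ℓ a - ℓ b| := by
        rw [← map_sub, innerSL_apply_apply, real_inner_smul_left, real_inner_self_eq_norm_sq, sq,
          ← mul_assoc, inv_mul_mul_self, abs_norm, dist_eq_norm]
    _ = |(∫ x, ℓ x * ballDensity a r x) - ∫ x, ℓ x * ballDensity b s x| := by
        rw [integral_mul_ballDensity, integral_mul_ballDensity, ℓ.setAverage_ball a hr,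
          ℓ.setAverage_ball b hs]
    _ ≤ W1 (ballDensity a r) (ballDensity b s) :=
        le_ciSup (bddAbove_W1_ballDensity a b hr hs) ⟨ℓ, hℓ⟩

lemma W1_ballDensity_zero_le {R : ℝ} (hR : 0 < R) :
    W1 (ballDensity 0 R) (ballDensity 0 1) ≤ |R - 1| :=
  Real.iSup_le (fun f => by
    simpa only [integral_mul_ballDensity] using abs_setAverage_ball_sub_le f.2 hR) (abs_nonneg _)

lemma cTS_ne_zero : cTS ≠ 0 := by
  simp [cTS]

lemma waveVelocity_ne_waveVelocity_one {R : ℝ} (hR : R ≠ 1) : waveVelocity R ≠ waveVelocity 1 := by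
  rw [waveVelocity, waveVelocity, Ne, smul_left_injective ℝ cTS_ne_zero |>.eq_iff, mul_one,
    inv_inj, mul_right_eq_self₀]
  exact fun h => h.elim hR ω₁_pos.ne'

/-- instability of the traveling wave ρ₁ in the 1-Wasserstein metric,
for any solution concept `TS` for which the explicit traveling waves ρ_R are the
solutions with spherical patch initial data. -/
theorem stmt5
    (TS : (E3 → ℝ) → (ℝ → E3 → ℝ) → Prop)
    (hTW : ∀ R : ℝ, 0 < R → TS (patch R) (fun t => ρR R t)) :
    ∃ ε > 0, ∀ η > 0, ∃ ρ₀ : E3 → ℝ, ∃ σ : ℝ → E3 → ℝ,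
      TS ρ₀ σ ∧ (∀ x, 0 ≤ ρ₀ x) ∧ (∫ x, ρ₀ x = 1) ∧ (∃ C, ∀ x, ρ₀ x ≤ C) ∧
      W1 ρ₀ (patch 1) < η ∧ ∃ T, ∀ t ≥ T, ε < W1 (σ t) (ρR 1 t) := by
  refine ⟨1, one_pos, fun η hη => ?_⟩
  set R := 1 + η / 2
  have hR : 0 < R := by positivity
  have hgap : 0 < dist (waveVelocity R) (waveVelocity 1) :=
    dist_pos.2 (waveVelocity_ne_waveVelocity_one (by simp [R, hη.ne']))
  have hsep : ∀ᶠ t in atTop, 1 < |t| * dist (waveVelocity R) (waveVelocity 1) :=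
    (tendsto_abs_atTop_atTop.atTop_mul_const hgap).eventually_gt_atTop 1
  obtain ⟨T, hT⟩ := eventually_atTop.1 hsep
  refine ⟨patch R, fun t => ρR R t, hTW R hR, uniformDensity_nonneg _, integral_uniformDensity
    measurableSet_ball (measure_ball_pos _ _ hR).ne' measure_ball_lt_top.ne,
    ⟨_, uniformDensity_le _⟩, ?_, T, fun t ht => ?_⟩
  · rw [patch_eq_ballDensity, patch_eq_ballDensity]
    calc W1 (ballDensity 0 R) (ballDensity 0 1) ≤ |R - 1| := W1_ballDensity_zero_le hR
      _ < η := by rw [add_sub_cancel_left, abs_of_pos (by positivity)]; linarith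
  · beta_reduce
    rw [ρR_eq_ballDensity hR, ρR_eq_ballDensity one_pos]
    calc 1 < |t| * dist (waveVelocity R) (waveVelocity 1) := hT t ht
      _ = dist (t • waveVelocity R) (t • waveVelocity 1) := by rw [dist_smul₀, Real.norm_eq_abs]
      _ ≤ _ := dist_le_W1_ballDensity _ _ hR one_pos
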